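/- Let N ≥ 2 be a natural number and let a, b be real numbers with 0 < a ≤ b. Then there exists a real number σ₀ such that for every complex number s = σ + i·t with σ ≥ σ₀ and a ≤ t ≤ b, one has |∑_{n=2}^{N} (n^{−s} + χ(s)·n^{s−1})| < |1 + χ(s)|. -/

import Mathlib

open Real

/-- `χ(s) = 2^s · π^(s-1) · sin(πs/2) · Γ(1-s)`, the factor in the functional
equation `ζ(s) = χ(s)·ζ(1-s)`. -/
noncomputable def chi (s : ℂ) : ℂ :=
  (2 : ℂ) ^ s * (π : ℂ) ^ (s - 1) * Complex.sin (π * s / 2) * Complex.Gamma (1 - s)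

/-!
The reflection formula turns `χ` into `χ(s) · 2 cos(πs/2) Γ(s) = (2π)^s`. On the strip
`a ≤ Im s ≤ b` with `a > 0` we have `|cos(πs/2)| ≥ sinh(πa/2) > 0`, and `|Γ(σ + it)|` grows at
least like `⌊σ - 1⌋!` uniformly in `t`: shifting `s` by an integer moves it into a compact box
where `|Γ|` is bounded below. Hence `χ(s) R^σ → 0` uniformly in `t` for every `R ≥ 0`, so the sum
is eventually smaller than `1/2` while `|1 + χ(s)| > 3/4`.
-/

open Filter Topology Set
open scoped Nat

lemma Complex.sinh_im_le_norm_cos (z : ℂ) : Real.sinh z.im ≤ ‖Complex.cos z‖ := by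
  have h := norm_sub_norm_le (Complex.exp (-z * I)) (-Complex.exp (z * I))
  rw [sub_neg_eq_add, add_comm, norm_neg, Complex.norm_exp, Complex.norm_exp] at h
  simp only [Complex.mul_re, Complex.neg_re, Complex.neg_im, Complex.I_re, Complex.I_im, mul_zero,
    mul_one, zero_sub, neg_neg] at h
  rw [Complex.cos, norm_div, Real.sinh_eq, Complex.norm_ofNat]
  linarith

lemma chi_mul_two_cos_mul_Gamma {s : ℂ} (hs : ∀ n : ℤ, s ≠ n) :
    chi s * (2 * Complex.cos (π * s / 2) * Complex.Gamma s) = 2 ^ s * π ^ s := by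
  have hsin : Complex.sin (π * s) ≠ 0 := by
    rw [Ne, Complex.sin_eq_zero_iff]
    rintro ⟨k, hk⟩
    exact hs k (mul_left_cancel₀ (Complex.ofReal_ne_zero.mpr pi_ne_zero) (by rw [hk, mul_comm]))
  have hΓ : Complex.Gamma s ≠ 0 := Complex.Gamma_ne_zero fun m hm => hs (-m) (by simp [hm])
  have hdouble : Complex.sin (π * s) = 2 * Complex.sin (π * s / 2) * Complex.cos (π * s / 2) := by
    rw [← Complex.sin_two_mul]; ring_nf
  have hreflection := Complex.Gamma_mul_Gamma_one_sub s
  rw [hdouble] at hsin hreflection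
  have hπ : (π : ℂ) ≠ 0 := Complex.ofReal_ne_zero.mpr pi_ne_zero
  calc chi s * (2 * Complex.cos (π * s / 2) * Complex.Gamma s)
      = 2 ^ s * π ^ s / π * (Complex.Gamma s * Complex.Gamma (1 - s) *
          (2 * Complex.sin (π * s / 2) * Complex.cos (π * s / 2))) := by
        rw [chi, Complex.cpow_sub _ _ hπ, Complex.cpow_one]; ring
    _ = 2 ^ s * π ^ s := by rw [hreflection, div_mul_cancel₀ _ hsin, div_mul_cancel₀ _ hπ]

lemma norm_chi_mul_le {s : ℂ} (hs : ∀ n : ℤ, s ≠ n) :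
    ‖chi s‖ * (2 * Real.sinh (π * s.im / 2) * ‖Complex.Gamma s‖) ≤ (2 * π) ^ s.re := by
  have hcos : Real.sinh (π * s.im / 2) ≤ ‖Complex.cos (π * s / 2)‖ := by
    simpa using Complex.sinh_im_le_norm_cos (π * s / 2)
  calc ‖chi s‖ * (2 * Real.sinh (π * s.im / 2) * ‖Complex.Gamma s‖)
      ≤ ‖chi s‖ * ‖2 * Complex.cos (π * s / 2) * Complex.Gamma s‖ := by
        rw [norm_mul, norm_mul, Complex.norm_ofNat]; gcongr
    _ = (2 * π) ^ s.re := by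
        rw [← norm_mul, chi_mul_two_cos_mul_Gamma hs, norm_mul, ← Complex.ofReal_ofNat,
          Complex.norm_cpow_eq_rpow_re_of_pos two_pos, Complex.norm_cpow_eq_rpow_re_of_pos pi_pos,
          mul_rpow zero_le_two pi_pos.le]

lemma factorial_mul_norm_Gamma_le {z : ℂ} (hz : 1 ≤ z.re) (n : ℕ) :
    n ! * ‖Complex.Gamma z‖ ≤ ‖Complex.Gamma (z + n)‖ := by
  induction n with
  | zero => simp
  | succ n ih =>
    have hre : (n + 1 : ℝ) ≤ (z + n).re := by simp; linarith
    have hzn : z + n ≠ 0 := fun h => by simp [h] at hre; linarith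
    rw [Nat.cast_succ, ← add_assoc, Complex.Gamma_add_one _ hzn, norm_mul, Nat.factorial_succ,
      Nat.cast_mul, mul_assoc, Nat.cast_succ]
    gcongr
    exact hre.trans (Complex.re_le_norm _)

lemma IsCompact.exists_pos_le_norm_Gamma {K : Set ℂ} (hK : IsCompact K)
    (hΓ : ∀ z ∈ K, Complex.Gamma z ≠ 0) : ∃ c > 0, ∀ z ∈ K, c ≤ ‖Complex.Gamma z‖ := by
  obtain ⟨C, hC⟩ :=
    hK.exists_bound_of_continuousOn Complex.differentiable_one_div_Gamma.continuous.continuousOn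
  refine ⟨(max C 1)⁻¹, by positivity, fun z hz => ?_⟩
  have hinv : ‖Complex.Gamma z‖⁻¹ ≤ max C 1 :=
    (norm_inv (Complex.Gamma z) ▸ hC z hz).trans (le_max_left _ _)
  exact inv_le_of_inv_le₀ (norm_pos_iff.mpr (hΓ z hz)) hinv

lemma exists_pos_mul_factorial_le_norm_Gamma (a b : ℝ) :
    ∃ c > 0, ∀ (n : ℕ) (s : ℂ), s.re ∈ Icc (n + 1 : ℝ) (n + 2) → s.im ∈ Icc a b →
      c * n ! ≤ ‖Complex.Gamma s‖ := by
  have hK : IsCompact (Icc (1 : ℝ) 2 ×ℂ Icc a b) := isCompact_Icc.reProdIm isCompact_Icc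
  obtain ⟨c, hc, hcK⟩ := hK.exists_pos_le_norm_Gamma fun z hz =>
    Complex.Gamma_ne_zero_of_re_pos (by linarith [hz.1.1])
  refine ⟨c, hc, fun n s hre him => ?_⟩
  have hbox : s - n ∈ Icc (1 : ℝ) 2 ×ℂ Icc a b :=
    ⟨by constructor <;> simp <;> linarith [hre.1, hre.2], by simpa using him⟩
  calc c * n ! = n ! * c := mul_comm _ _
    _ ≤ n ! * ‖Complex.Gamma (s - n)‖ := by gcongr; exact hcK _ hbox
    _ ≤ ‖Complex.Gamma (s - n + n)‖ := factorial_mul_norm_Gamma_le hbox.1.1 n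
    _ = ‖Complex.Gamma s‖ := by rw [sub_add_cancel]

lemma eventually_norm_chi_mul_rpow_lt {a : ℝ} (ha : 0 < a) (b : ℝ) {R : ℝ} (hR : 0 ≤ R)
    {ε : ℝ} (hε : 0 < ε) :
    ∀ᶠ σ : ℝ in atTop, ∀ t ∈ Icc a b, ‖chi (σ + Complex.I * t)‖ * R ^ σ < ε := by
  obtain ⟨c, hc, hcΓ⟩ := exists_pos_mul_factorial_le_norm_Gamma a b
  have hsinh : 0 < Real.sinh (π * a / 2) := Real.sinh_pos_iff.mpr (by positivity)
  obtain ⟨K, hK1, hRK⟩ : ∃ K : ℝ, 1 ≤ K ∧ 2 * π * R ≤ K :=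
    ⟨2 * π * R + 1, by simp only [le_add_iff_nonneg_left]; positivity, by linarith⟩
  have hfloor : Tendsto (fun σ : ℝ => ⌊σ - 1⌋₊) atTop atTop :=
    tendsto_nat_floor_atTop.comp (tendsto_atTop_add_const_right _ (-1) tendsto_id)
  have hlim : Tendsto (fun σ : ℝ => K ^ 2 * (K ^ ⌊σ - 1⌋₊ / (⌊σ - 1⌋₊ ! : ℝ))) atTop (𝓝 0) := by
    simpa using ((FloorSemiring.tendsto_pow_div_factorial_atTop K).comp hfloor).const_mul (K ^ 2)
  have hεD : 0 < ε * (2 * Real.sinh (π * a / 2) * c) := by positivity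
  filter_upwards [hlim.eventually (gt_mem_nhds hεD), eventually_ge_atTop 1] with σ hσε hσ t ht
  set n := ⌊σ - 1⌋₊
  set s : ℂ := σ + Complex.I * t
  have hσn : σ ∈ Icc (n + 1 : ℝ) (n + 2) := by
    constructor <;> linarith [Nat.floor_le (by linarith : 0 ≤ σ - 1), Nat.lt_floor_add_one (σ - 1)]
  have hsre : s.re = σ := by simp [s]
  have hsim : s.im = t := by simp [s]
  have hs : ∀ m : ℤ, s ≠ m := fun m hm => by
    have := congrArg Complex.im hm; simp [hsim] at this; linarith [ht.1]
  have hsinh_t : Real.sinh (π * a / 2) ≤ Real.sinh (π * s.im / 2) := by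
    rw [Real.sinh_le_sinh, hsim]; gcongr; exact ht.1
  have hΓ := hcΓ n s (hsre ▸ hσn) (hsim ▸ ht)
  have hχ : ‖chi s‖ * (2 * Real.sinh (π * a / 2) * c * n !) ≤ (2 * π) ^ σ := by
    refine le_trans ?_ (hsre ▸ norm_chi_mul_le hs)
    rw [mul_assoc _ c]
    gcongr
    linarith
  have hpow : (2 * π) ^ σ * R ^ σ ≤ K ^ 2 * K ^ n := by
    rw [← mul_rpow (by positivity) hR, ← pow_add, add_comm, ← rpow_natCast]
    calc (2 * π * R) ^ σ ≤ K ^ σ := by gcongr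
      _ ≤ K ^ ((n + 2 : ℕ) : ℝ) := rpow_le_rpow_of_exponent_le hK1 (by push_cast; exact hσn.2)
  have hfac : (0 : ℝ) < n ! := by positivity
  refine lt_of_mul_lt_mul_right (a := 2 * Real.sinh (π * a / 2) * c * n !) ?_ (by positivity)
  calc ‖chi s‖ * R ^ σ * (2 * Real.sinh (π * a / 2) * c * n !)
      = ‖chi s‖ * (2 * Real.sinh (π * a / 2) * c * n !) * R ^ σ := by ring
    _ ≤ (2 * π) ^ σ * R ^ σ := by gcongr
    _ ≤ K ^ 2 * (K ^ n / n !) * n ! := by rwa [mul_assoc, div_mul_cancel₀ _ hfac.ne']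
    _ < ε * (2 * Real.sinh (π * a / 2) * c) * n ! := by gcongr
    _ = ε * (2 * Real.sinh (π * a / 2) * c * n !) := by ring

lemma norm_sum_cpow_add_mul_cpow_le (N : ℕ) (c s : ℂ) (hs : 1 ≤ s.re) :
    ‖∑ n ∈ Finset.Icc 2 N, ((n : ℂ) ^ (-s) + c * (n : ℂ) ^ (s - 1))‖ ≤
      N * 2 ^ (-s.re) + ‖c‖ * N ^ s.re := by
  have hterm : ∀ n ∈ Finset.Icc 2 N,
      ‖(n : ℂ) ^ (-s) + c * (n : ℂ) ^ (s - 1)‖ ≤ 2 ^ (-s.re) + ‖c‖ * N ^ (s.re - 1) := by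
    intro n hn
    obtain ⟨h2n, hnN⟩ := Finset.mem_Icc.mp hn
    have hn0 : 0 < n := by omega
    calc ‖(n : ℂ) ^ (-s) + c * (n : ℂ) ^ (s - 1)‖
        ≤ ‖(n : ℂ) ^ (-s)‖ + ‖c‖ * ‖(n : ℂ) ^ (s - 1)‖ := by rw [← norm_mul]; exact norm_add_le _ _
      _ = (n : ℝ) ^ (-s.re) + ‖c‖ * (n : ℝ) ^ (s.re - 1) := by
        rw [Complex.norm_natCast_cpow_of_pos hn0, Complex.norm_natCast_cpow_of_pos hn0,
          Complex.neg_re, Complex.sub_re, Complex.one_re]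
      _ ≤ 2 ^ (-s.re) + ‖c‖ * N ^ (s.re - 1) := by
        gcongr ?_ + _ * ?_
        · exact rpow_le_rpow_of_nonpos two_pos (by exact_mod_cast h2n) (by linarith)
        · exact rpow_le_rpow (Nat.cast_nonneg n) (by exact_mod_cast hnN) (by linarith)
  have hcard : ((Finset.Icc 2 N).card : ℝ) ≤ N := by simp
  calc ‖∑ n ∈ Finset.Icc 2 N, ((n : ℂ) ^ (-s) + c * (n : ℂ) ^ (s - 1))‖
      ≤ (Finset.Icc 2 N).card * (2 ^ (-s.re) + ‖c‖ * N ^ (s.re - 1)) := by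
        rw [← nsmul_eq_mul]
        exact (norm_sum_le _ _).trans (Finset.sum_le_card_nsmul _ _ _ hterm)
    _ ≤ N * (2 ^ (-s.re) + ‖c‖ * N ^ (s.re - 1)) := by gcongr
    _ = N * 2 ^ (-s.re) + ‖c‖ * N ^ s.re := by
        rw [mul_add, mul_left_comm, ← rpow_one_add' (Nat.cast_nonneg N) (by linarith),
          add_sub_cancel]

theorem rouche_inequality_general (N : ℕ) (a b : ℝ) (ha : 0 < a) :
    ∃ σ₀ : ℝ, ∀ σ t : ℝ, σ₀ ≤ σ → a ≤ t → t ≤ b →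
      ‖∑ n ∈ Finset.Icc 2 N,
          ((n : ℂ) ^ (-((σ : ℂ) + Complex.I * t)) +
            chi ((σ : ℂ) + Complex.I * t) * (n : ℂ) ^ ((σ : ℂ) + Complex.I * t - 1))‖ <
        ‖1 + chi ((σ : ℂ) + Complex.I * t)‖ := by
  have hquarter : (0 : ℝ) < 1 / 4 := by norm_num
  have hχN := eventually_norm_chi_mul_rpow_lt ha b (Nat.cast_nonneg N) hquarter
  have hχ := eventually_norm_chi_mul_rpow_lt ha b zero_le_one hquarter
  have hdirichlet : ∀ᶠ σ : ℝ in atTop, N * (2 : ℝ) ^ (-σ) < 1 / 4 := by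
    have h2 := (tendsto_rpow_atBot_of_base_gt_one 2 one_lt_two).comp tendsto_neg_atTop_atBot
    simpa using (h2.const_mul (N : ℝ)).eventually (gt_mem_nhds (by norm_num : (N : ℝ) * 0 < 1 / 4))
  obtain ⟨σ₀, hσ₀⟩ :=
    (hχN.and (hχ.and (hdirichlet.and (eventually_ge_atTop 1)))).exists_forall_of_atTop
  refine ⟨σ₀, fun σ t hσ hat htb => ?_⟩
  obtain ⟨hχN, hχ, hdirichlet, hσ1⟩ := hσ₀ σ hσ
  have hre : ((σ : ℂ) + Complex.I * t).re = σ := by simp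
  have hχN := hχN t ⟨hat, htb⟩
  have hχ := hχ t ⟨hat, htb⟩
  rw [one_rpow, mul_one] at hχ
  calc _ ≤ N * 2 ^ (-σ) + ‖chi _‖ * N ^ σ :=
        hre ▸ norm_sum_cpow_add_mul_cpow_le N _ _ (hre ▸ hσ1)
    _ < 1 - ‖chi ((σ : ℂ) + Complex.I * t)‖ := by linarith
    _ ≤ ‖1 + chi ((σ : ℂ) + Complex.I * t)‖ := by
        simpa using norm_sub_norm_le (1 : ℂ) (-chi ((σ : ℂ) + Complex.I * t))

/-- The Rouché-type inequality `|∑_{n=2}^N (n^{-s} + χ(s)·n^{s-1})| < |1 + χ(s)|`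
for `s = σ + it` with `σ` large enough and `a ≤ t ≤ b`. -/
theorem rouche_inequality (N : ℕ) (hN : 2 ≤ N) (a b : ℝ) (ha : 0 < a) (hab : a ≤ b) :
    ∃ σ₀ : ℝ, ∀ σ t : ℝ, σ₀ ≤ σ → a ≤ t → t ≤ b →
      ‖∑ n ∈ Finset.Icc 2 N,
          ((n : ℂ) ^ (-((σ : ℂ) + Complex.I * t)) +
            chi ((σ : ℂ) + Complex.I * t) * (n : ℂ) ^ ((σ : ℂ) + Complex.I * t - 1))‖ <
        ‖1 + chi ((σ : ℂ) + Complex.I * t)‖ :=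
  rouche_inequality_general N a b ha
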